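/- Let D be a distribution on X × {0,1} with p = Pr_{(x,y)∼D}[y = 1], let f : X → {0,1}, and let k ≥ 1. Let (x_1,y_1),…,(x_k,y_k) be i.i.d. draws from D and α = (1/k)·Σ_{j=1}^k y_j. Then E[((1/k)·Σ_{j=1}^k f(x_j) − α)²] = (1/k)·L(f) + ((k−1)/k)·(E_{(x,y)∼D}[f(x)] − p)², where L(f) = Pr_{(x,y)∼D}[f(x) ≠ y]. -/

import Mathlib

open MeasureTheory Finset
open scoped ENNReal NNReal

noncomputable section

namespace LLP

/-- Real value of a Boolean label/prediction (`0` or `1`). -/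
def bval (b : Bool) : ℝ := if b then 1 else 0

/-- Label proportion `α` of a bag of `k` labeled examples. -/
def labelProp {X : Type*} {k : ℕ} (bag : Fin k → X × Bool) : ℝ :=
  (∑ j, bval (bag j).2) / (k : ℝ)

/-- Average prediction `(1/k)·Σ_j f(x_j)` of `f` on a bag. -/
def predProp {X : Type*} {k : ℕ} (f : X → Bool) (bag : Fin k → X × Bool) : ℝ :=
  (∑ j, bval (f (bag j).1)) / (k : ℝ)

/-- Instance-level classification loss `L(f) = Pr_{(x,y)∼D}[f(x) ≠ y]`. -/
def err {X : Type*} [MeasurableSpace X] (D : Measure (X × Bool)) (f : X → Bool) : ℝ :=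
  (D {p | f p.1 ≠ p.2}).toReal

/-- `S` is shattered by the Boolean-valued class `F`. -/
def Shatters {Z : Type*} (F : Set (Z → Bool)) (S : Finset Z) : Prop :=
  ∀ T ⊆ S, ∃ f ∈ F, ∀ z ∈ S, (f z = true ↔ z ∈ T)

/-- The VC dimension of `F` is at most `d`. -/
def VCDimLE {Z : Type*} (F : Set (Z → Bool)) (d : ℕ) : Prop :=
  ∀ S : Finset Z, Shatters F S → S.card ≤ d

/-- Joint distribution of `n` i.i.d. bags, each consisting of `k` i.i.d. draws from `D`. -/
def bagMeasure {X : Type*} [MeasurableSpace X] (D : Measure (X × Bool)) (n k : ℕ) :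
    Measure (Fin n → Fin k → X × Bool) :=
  Measure.pi fun _ => Measure.pi fun _ => D

/-- Empirical proportional (0-1) risk: fraction of bags whose predicted proportion
mismatches the observed label proportion. -/
def empPM {X : Type*} {n k : ℕ} (f : X → Bool) (ω : Fin n → Fin k → X × Bool) : ℝ :=
  (∑ i, if predProp f (ω i) = labelProp (ω i) then (0 : ℝ) else 1) / (n : ℝ)

/-- Empirical proportional square loss. -/
def empSQ {X : Type*} {n k : ℕ} (f : X → Bool) (ω : Fin n → Fin k → X × Bool) : ℝ :=
  (∑ i, (predProp f (ω i) - labelProp (ω i)) ^ 2) / (n : ℝ)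

/-- The EasyLLP estimate of the 0-1 loss on a single bag, using marginal label
proportion `p`. -/
def ellEZ {X : Type*} {k : ℕ} (p : ℝ) (f : X → Bool) (bag : Fin k → X × Bool) : ℝ :=
  ((k : ℝ) * (labelProp bag - p) + p) * (1 - predProp f bag)
    + ((k : ℝ) * (p - labelProp bag) + (1 - p)) * predProp f bag

/-- Marginal label proportion `p = Pr[y = 1]`. -/
def labelP {X : Type*} [MeasurableSpace X] (D : Measure (X × Bool)) : ℝ :=
  (D {q | q.2 = true}).toReal

end LLP

open ProbabilityTheory

/-!
Write `g(x, y) = f(x) − y`, so that `k · (predProp f − labelProp)` is the sum `S` of `k` i.i.d.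
copies of `g`. Since `g² = 𝟙[f(x) ≠ y]`, we have `E[g²] = L(f)` and `E[g] = E[f(x)] − p`, and
`E[S²] = Var S + (E S)² = k (E[g²] − E[g]²) + k² E[g]²`; dividing by `k²` gives the claim.
-/

theorem integral_sq_sum_comp_eval_pi {ι α : Type*} [Fintype ι] [MeasurableSpace α]
    {μ : Measure α} [IsProbabilityMeasure μ] {g : α → ℝ} (hg : MemLp g 2 μ) :
    ∫ ω, (∑ i, g (ω i)) ^ 2 ∂(Measure.pi fun _ : ι => μ) =
      Fintype.card ι * ∫ x, g x ^ 2 ∂μ +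
        Fintype.card ι * (Fintype.card ι - 1) * (∫ x, g x ∂μ) ^ 2 := by
  have hgi : ∀ i : ι, MemLp (fun ω : ι → α => g (ω i)) 2 (Measure.pi fun _ => μ) :=
    fun i => hg.comp_measurePreserving (measurePreserving_eval _ i)
  have hsum : MemLp (∑ i, fun ω : ι → α => g (ω i)) 2 (Measure.pi fun _ => μ) :=
    memLp_finsetSum' _ fun i _ => hgi i
  have hmean :
      ∫ ω, ∑ i, g (ω i) ∂(Measure.pi fun _ : ι => μ) = Fintype.card ι * ∫ x, g x ∂μ := by
    rw [integral_finsetSum _ fun i _ => (hgi i).integrable one_le_two]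
    simp [integral_comp_eval (μ := fun _ : ι => μ) hg.aestronglyMeasurable]
  have hvar := variance_sum_pi (μ := fun _ : ι => μ) fun _ => hg
  rw [variance_eq_sub hsum, variance_eq_sub hg] at hvar
  simp only [Finset.sum_const, Finset.card_univ, nsmul_eq_mul, Pi.pow_apply,
    Finset.sum_apply] at hvar
  rw [hmean] at hvar
  linear_combination hvar

namespace LLP

theorem bval_comp_eq_indicator {α : Type*} (p : α → Bool) :
    (fun a => bval (p a)) = {a | p a = true}.indicator 1 := by
  funext a
  cases h : p a <;> simp [bval, h]

theorem sq_bval_sub_bval (a b : Bool) : (bval a - bval b) ^ 2 = bval (a != b) := by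
  cases a <;> cases b <;> norm_num [bval]

theorem predProp_sub_labelProp {X : Type*} {f : X → Bool} {k : ℕ} (bag : Fin k → X × Bool) :
    predProp f bag - labelProp bag = (∑ j, (bval (f (bag j).1) - bval (bag j).2)) / k := by
  rw [predProp, labelProp, div_sub_div_same, Finset.sum_sub_distrib]

section BoolValued

variable {α : Type*} [MeasurableSpace α] {μ : Measure α} {p : α → Bool}

theorem memLp_bval_comp [IsFiniteMeasure μ] (hp : Measurable p) (q : ℝ≥0∞) :
    MemLp (fun a => bval (p a)) q μ :=
  MemLp.of_bound (((Measurable.of_discrete (f := bval)).comp hp).aestronglyMeasurable) 1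
    (ae_of_all _ fun a => by cases p a <;> simp [bval])

theorem integral_bval_comp (hp : Measurable p) :
    ∫ a, bval (p a) ∂μ = μ.real {a | p a = true} := by
  rw [bval_comp_eq_indicator,
    integral_indicator_one (s := {a | p a = true}) (hp (measurableSet_singleton true))]

end BoolValued

section Bag

variable {X : Type*} [MeasurableSpace X] {D : Measure (X × Bool)} {f : X → Bool}

theorem memLp_bval_sub [IsFiniteMeasure D] (hf : Measurable f) :
    MemLp (fun q : X × Bool => bval (f q.1) - bval q.2) 2 D :=
  (memLp_bval_comp (by fun_prop) 2).sub (memLp_bval_comp measurable_snd 2)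

theorem integral_bval_sub [IsFiniteMeasure D] (hf : Measurable f) :
    ∫ q, (bval (f q.1) - bval q.2) ∂D = (∫ q, bval (f q.1) ∂D) - labelP D := by
  rw [integral_sub, integral_bval_comp measurable_snd, labelP, measureReal_def]
  all_goals exact (memLp_bval_comp (by fun_prop) 1).integrable le_rfl

theorem integral_sq_bval_sub (hf : Measurable f) :
    ∫ q, (bval (f q.1) - bval q.2) ^ 2 ∂D = err D f := by
  simp_rw [sq_bval_sub_bval]
  rw [integral_bval_comp (by fun_prop), err, measureReal_def]
  simp

end Bag

theorem prop_square_loss_expectation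
    (X : Type*) [MeasurableSpace X] (D : Measure (X × Bool)) [IsProbabilityMeasure D]
    (f : X → Bool) (hf : Measurable f) (k : ℕ) :
    ∫ bag, (predProp f bag - labelProp bag) ^ 2 ∂(Measure.pi fun _ : Fin k => D) =
      (1 / (k : ℝ)) * err D f +
        (((k : ℝ) - 1) / (k : ℝ)) * ((∫ q, bval (f q.1) ∂D) - labelP D) ^ 2 := by
  simp_rw [predProp_sub_labelProp, div_pow]
  rw [integral_div, integral_sq_sum_comp_eval_pi (memLp_bval_sub hf), Fintype.card_fin,
    integral_sq_bval_sub hf, integral_bval_sub hf]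
  -- For `k = 0` both sides are `0`, by `x / 0 = 0`.
  rcases eq_or_ne (k : ℝ) 0 with hk | hk
  · simp [hk]
  · field_simp

end LLP
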